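/- arXiv:1509.05790 — 2 statements merged into one kernel-verified Lean document; each statement's English description precedes it below -/
import Mathlib

section
/- Let A = [-r,r]^d be a hypercube in R^d and let z_1,...,z_t be points in A with t ≥ 2. Then there exists a perfect matching (up to one unmatched point if t is odd) σ of {1,...,t} such that for some constant B depending only on d, r, and α ∈ (0,d), the sum over matched pairs of ‖z_k − z_{σ(k)}‖^α is at most B · t^{1−α/d}. -/
/-!
Greedy matching. Among `N ≥ 2` points of `[-r, r]^d`, cut the cube into `m^d < N` subcubes
with `2m ≥ N^(1/d)`: two of the points share a subcube, so some pair is at distance at most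
`4r√d · N^(-1/d)`. Match that pair and recurse on the remaining `N - 2` points. With
`θ = 1 - α/d`, concavity of `x ↦ x^θ` bounds the cost `2(4r√d)^α N^(θ-1)` of each step by
`(4r√d)^α/θ · (N^θ - (N-2)^θ)`, which telescopes to `(4r√d)^α/θ · t^θ`.
-/

open Finset

theorem Function.Involutive.swap_mul {ι : Type*} [DecidableEq ι] {τ : Equiv.Perm ι}
    (hτ : Function.Involutive τ) {p q : ι} (hp : τ p = p) (hq : τ q = q) :
    Function.Involutive (Equiv.swap p q * τ) := by
  have hcomm : τ * Equiv.swap p q = Equiv.swap p q * τ := by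
    rw [Equiv.mul_swap_eq_swap_mul, hp, hq]
  intro k
  change (Equiv.swap p q * τ * (Equiv.swap p q * τ)) k = k
  rw [mul_assoc, ← mul_assoc τ, hcomm, mul_assoc, ← mul_assoc, Equiv.swap_mul_self, one_mul]
  exact hτ k

theorem exists_involutive_perm_sum_le {ι : Type*} [DecidableEq ι] (c : ι → ι → ℝ)
    (hc : ∀ k, c k k = 0) (G : ℕ → ℝ) (hG : ∀ n, 0 ≤ G n)
    (hstep : ∀ S : Finset ι, 2 ≤ #S →
      ∃ p ∈ S, ∃ q ∈ S, p ≠ q ∧ c p q + c q p ≤ G #S - G (#S - 2))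
    (S : Finset ι) :
    ∃ σ : Equiv.Perm ι, Function.Involutive σ ∧ (∀ k ∉ S, σ k = k) ∧
      (∀ k ∈ S, ∀ l ∈ S, σ k = k → σ l = l → k = l) ∧
      ∑ k ∈ S, c k (σ k) ≤ G #S := by
  induction S using Finset.strongInduction with
  | H S ih =>
  by_cases hS : #S ≤ 1
  · refine ⟨1, fun _ => rfl, fun _ _ => rfl,
      fun k hk l hl _ _ => card_le_one.mp hS k hk l hl, ?_⟩
    simpa [hc] using hG #S
  obtain ⟨p, hp, q, hq, hpq, hcost⟩ := hstep S (by omega)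
  set S' := (S.erase p).erase q
  have hqSp : q ∈ S.erase p := mem_erase.mpr ⟨hpq.symm, hq⟩
  have hS'S : S' ⊂ S := (erase_ssubset hqSp).trans (erase_ssubset hp)
  have hmemS' : ∀ k, k ∈ S' ↔ k ≠ q ∧ k ≠ p ∧ k ∈ S := by simp [S']
  obtain ⟨τ, hτ, hτS', hτfix, hτsum⟩ := ih S' hS'S
  have hτp : τ p = p := hτS' p (by simp [hmemS'])
  have hτq : τ q = q := hτS' q (by simp [hmemS'])
  set σ := Equiv.swap p q * τ
  have hσp : σ p = q := by simp [σ, hτp]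
  have hσq : σ q = p := by simp [σ, hτq]
  have hσ : ∀ k, k ≠ p → k ≠ q → σ k = τ k := fun k hkp hkq =>
    Equiv.swap_apply_of_ne_of_ne (hτp ▸ hτ.injective.ne hkp) (hτq ▸ hτ.injective.ne hkq)
  refine ⟨σ, hτ.swap_mul hτp hτq, fun k hk => ?_, fun k hk l hl hσk hσl => ?_, ?_⟩
  · have hkp : k ≠ p := fun h => hk (h ▸ hp)
    have hkq : k ≠ q := fun h => hk (h ▸ hq)
    rw [hσ k hkp hkq, hτS' k fun h => hk (hS'S.subset h)]
  · have hfix : ∀ k ∈ S, σ k = k → k ∈ S' ∧ τ k = k := by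
      intro k hk hσk
      have hkp : k ≠ p := by rintro rfl; exact hpq (hσp ▸ hσk).symm
      have hkq : k ≠ q := by rintro rfl; exact hpq (hσq ▸ hσk)
      exact ⟨(hmemS' k).mpr ⟨hkq, hkp, hk⟩, hσ k hkp hkq ▸ hσk⟩
    exact hτfix k (hfix k hk hσk).1 l (hfix l hl hσl).1 (hfix k hk hσk).2 (hfix l hl hσl).2
  · have hsumS' : ∑ k ∈ S', c k (σ k) = ∑ k ∈ S', c k (τ k) := sum_congr rfl fun k hk => by
      rw [hσ k ((hmemS' k).mp hk).2.1 ((hmemS' k).mp hk).1]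
    have hcard : #S' = #S - 2 := by
      rw [card_erase_of_mem hqSp, card_erase_of_mem hp]; rfl
    calc ∑ k ∈ S, c k (σ k) = c p q + c q p + ∑ k ∈ S', c k (τ k) := by
          rw [← add_sum_erase S _ hp, ← add_sum_erase _ _ hqSp, hσp, hσq, hsumS', add_assoc]
      _ ≤ G #S - G (#S - 2) + G #S' := add_le_add hcost hτsum
      _ = G #S := by rw [hcard]; ring

-- Clamping at `m - 1` puts the endpoint `x = m` into the last cell.
theorem min_floor_le_and_le_min_floor_add_one {x : ℝ} {m : ℕ} (hm : 1 ≤ m) (hx0 : 0 ≤ x)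
    (hxm : x ≤ m) : ((min ⌊x⌋₊ (m - 1) : ℕ) : ℝ) ≤ x ∧ x ≤ (min ⌊x⌋₊ (m - 1) : ℕ) + 1 := by
  have hfloor := Nat.floor_le hx0
  rcases le_total ⌊x⌋₊ (m - 1) with h | h
  · rw [min_eq_left h]
    exact ⟨hfloor, (Nat.lt_floor_add_one x).le⟩
  · rw [min_eq_right h, Nat.cast_sub hm, Nat.cast_one]
    exact ⟨le_trans (by exact_mod_cast h) hfloor, by linarith⟩

theorem abs_sub_le_one_of_min_floor_eq {x y : ℝ} {m : ℕ} (hm : 1 ≤ m) (hx0 : 0 ≤ x)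
    (hxm : x ≤ m) (hy0 : 0 ≤ y) (hym : y ≤ m)
    (h : min ⌊x⌋₊ (m - 1) = min ⌊y⌋₊ (m - 1)) : |x - y| ≤ 1 := by
  obtain ⟨hx1, hx2⟩ := min_floor_le_and_le_min_floor_add_one hm hx0 hxm
  obtain ⟨hy1, hy2⟩ := min_floor_le_and_le_min_floor_add_one hm hy0 hym
  rw [h] at hx1 hx2
  rw [abs_le]; constructor <;> linarith

theorem EuclideanSpace.norm_le_sqrt_card_mul {n : Type*} [Fintype n]
    (x : EuclideanSpace ℝ n) {c : ℝ} (hc : 0 ≤ c) (hx : ∀ i, |x i| ≤ c) :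
    ‖x‖ ≤ √(Fintype.card n) * c := by
  rw [EuclideanSpace.norm_eq, ← Real.sqrt_sq hc, ← Real.sqrt_mul (Nat.cast_nonneg _)]
  gcongr
  calc ∑ i, ‖x i‖ ^ 2 ≤ ∑ _i : n, c ^ 2 := sum_le_sum fun i _ => by
        rw [Real.norm_eq_abs]; exact pow_le_pow_left₀ (abs_nonneg _) (hx i) 2
    _ = Fintype.card n * c ^ 2 := by simp

theorem exists_ne_norm_sub_le_of_pow_lt {ι n : Type*} [Fintype n] [DecidableEq n]
    (z : ι → EuclideanSpace ℝ n) {r : ℝ} (hr : 0 < r) {m : ℕ} (hm : 1 ≤ m)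
    (S : Finset ι) (hz : ∀ k ∈ S, ∀ i, |z k i| ≤ r) (hS : m ^ Fintype.card n < #S) :
    ∃ p ∈ S, ∃ q ∈ S, p ≠ q ∧ ‖z p - z q‖ ≤ √(Fintype.card n) * (2 * r / m) := by
  have hm0 : (0 : ℝ) < m := by exact_mod_cast hm
  set scaled : ι → n → ℝ := fun k i => (z k i + r) * m / (2 * r)
  have hscaled : ∀ k ∈ S, ∀ i, 0 ≤ scaled k i ∧ scaled k i ≤ m := fun k hk i => by
    obtain ⟨h1, h2⟩ := abs_le.mp (hz k hk i)
    constructor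
    · exact div_nonneg (mul_nonneg (by linarith) hm0.le) (by linarith)
    · rw [div_le_iff₀ (by linarith)]; nlinarith
  set cell : ι → n → ℕ := fun k i => min ⌊scaled k i⌋₊ (m - 1)
  have hcard : #(Fintype.piFinset fun _ : n => range m) < #S := by
    simpa [Fintype.card_piFinset] using hS
  obtain ⟨p, hp, q, hq, hpq, hcell⟩ := exists_ne_map_eq_of_card_lt_of_maps_to hcard
    (f := cell) fun k _ => Fintype.mem_piFinset.mpr fun i =>
      mem_range.mpr ((min_le_right _ _).trans_lt (by omega))
  refine ⟨p, hp, q, hq, hpq, EuclideanSpace.norm_le_sqrt_card_mul _ (by positivity) ?_⟩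
  intro i
  have h := abs_sub_le_one_of_min_floor_eq hm (hscaled p hp i).1 (hscaled p hp i).2
    (hscaled q hq i).1 (hscaled q hq i).2 (congrFun hcell i)
  have hdiff : scaled p i - scaled q i = (z p i - z q i) * (m / (2 * r)) := by
    simp only [scaled]; ring
  have hfac : 0 < m / (2 * r) := div_pos hm0 (by linarith)
  rw [hdiff, abs_mul, abs_of_pos hfac, ← le_div_iff₀ hfac] at h
  simpa [div_div_eq_mul_div] using h

theorem exists_pow_lt_le_two_mul_pow {d k : ℕ} (hd : d ≠ 0) (hk : 2 ≤ k) :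
    ∃ m, 1 ≤ m ∧ m ^ d < k ∧ k ≤ (2 * m) ^ d := by
  set m := Nat.findGreatest (fun m => m ^ d < k) k
  have hone : 1 ^ d < k := by rw [one_pow]; omega
  have hm1 : 1 ≤ m := Nat.le_findGreatest (by omega) hone
  have hmk : m ^ d < k := Nat.findGreatest_spec (P := fun m => m ^ d < k) (by omega) hone
  have hm_lt : m < k := lt_of_le_of_lt (Nat.le_self_pow hd m) hmk
  have hsucc : k ≤ (m + 1) ^ d := not_lt.mp
    (Nat.findGreatest_is_greatest (P := fun m => m ^ d < k) (Nat.lt_succ_self m) hm_lt)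
  exact ⟨m, hm1, hmk, hsucc.trans (Nat.pow_le_pow_left (by omega) d)⟩

theorem exists_ne_norm_sub_le_mul_rpow {ι : Type*} {d : ℕ} (hd : d ≠ 0)
    (z : ι → EuclideanSpace ℝ (Fin d)) {r : ℝ} (hr : 0 < r) (S : Finset ι)
    (hz : ∀ k ∈ S, ∀ i, |z k i| ≤ r) (hS : 2 ≤ #S) :
    ∃ p ∈ S, ∃ q ∈ S, p ≠ q ∧ ‖z p - z q‖ ≤ 4 * r * √d * (#S : ℝ) ^ (-(d : ℝ)⁻¹) := by
  obtain ⟨m, hm, hmS, hSm⟩ := exists_pow_lt_le_two_mul_pow hd hS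
  obtain ⟨p, hp, q, hq, hpq, hdist⟩ :=
    exists_ne_norm_sub_le_of_pow_lt z hr hm S hz (by simpa using hmS)
  refine ⟨p, hp, q, hq, hpq, hdist.trans ?_⟩
  have hS0 : (0 : ℝ) < #S := by norm_cast; omega
  have hroot : (#S : ℝ) ^ (d : ℝ)⁻¹ ≤ 2 * m := by
    calc (#S : ℝ) ^ (d : ℝ)⁻¹ ≤ (((2 * m : ℕ) : ℝ) ^ d) ^ (d : ℝ)⁻¹ := by
          gcongr; exact_mod_cast hSm
      _ = 2 * m := by rw [Real.pow_rpow_inv_natCast (by positivity) hd]; push_cast; ring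
  rw [Real.rpow_neg hS0.le, Fintype.card_fin]
  calc √d * (2 * r / m) = 4 * r * √d * (2 * m : ℝ)⁻¹ := by field_simp; norm_num
    _ ≤ 4 * r * √d * ((#S : ℝ) ^ (d : ℝ)⁻¹)⁻¹ := by gcongr

theorem two_mul_mul_rpow_sub_one_le_rpow_sub_rpow {x θ : ℝ} (hx : 2 ≤ x) (hθ0 : 0 ≤ θ)
    (hθ1 : θ ≤ 1) : 2 * θ * x ^ (θ - 1) ≤ x ^ θ - (x - 2) ^ θ := by
  have hx0 : 0 < x := by linarith
  have hs : -1 ≤ -2 / x := by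
    rw [neg_div, neg_le_neg_iff, div_le_one hx0]; exact hx
  calc 2 * θ * x ^ (θ - 1) = x ^ θ - x ^ θ * (1 + θ * (-2 / x)) := by
        rw [Real.rpow_sub_one hx0.ne']; field_simp; ring
    _ ≤ x ^ θ - x ^ θ * (1 + -2 / x) ^ θ := by
        gcongr; exact rpow_one_add_le_one_add_mul_self hs hθ0 hθ1
    _ = x ^ θ - (x - 2) ^ θ := by
        rw [← Real.mul_rpow hx0.le (by linarith)]; congr 2; field_simp; ring

theorem two_mul_rpow_le_rpow_sub_rpow {D c N α d : ℝ} (hD : 0 ≤ D)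
    (hDc : D ≤ c * N ^ (-d⁻¹)) (hN : 2 ≤ N) (hα : 0 < α) (hαd : α < d) :
    2 * D ^ α ≤ c ^ α / (1 - α / d) * (N ^ (1 - α / d) - (N - 2) ^ (1 - α / d)) := by
  have hN0 : 0 < N := by linarith
  have hd0 : 0 < d := hα.trans hαd
  have hθ : 0 < 1 - α / d := by rw [sub_pos, div_lt_one hd0]; exact hαd
  have hc : 0 ≤ c := nonneg_of_mul_nonneg_left (hD.trans hDc) (by positivity)
  have hDα : D ^ α ≤ c ^ α * N ^ (1 - α / d - 1) := by
    calc D ^ α ≤ (c * N ^ (-d⁻¹)) ^ α := by gcongr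
      _ = c ^ α * N ^ (1 - α / d - 1) := by
          rw [Real.mul_rpow hc (by positivity), ← Real.rpow_mul hN0.le]; congr 2; ring
  calc 2 * D ^ α ≤ c ^ α / (1 - α / d) * (2 * (1 - α / d) * N ^ (1 - α / d - 1)) := by
        rw [div_mul_eq_mul_div, le_div_iff₀ hθ]; nlinarith
    _ ≤ c ^ α / (1 - α / d) * (N ^ (1 - α / d) - (N - 2) ^ (1 - α / d)) := by
        gcongr
        exact two_mul_mul_rpow_sub_one_le_rpow_sub_rpow hN hθ.le (by linarith [div_pos hα hd0])

theorem stmt_0_general (d : ℕ) (r : ℝ) (hr : 0 < r) (α : ℝ)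
    (hα : 0 < α) (hαd : α < d) :
    ∃ B : ℝ, 0 < B ∧ ∀ t : ℕ, 2 ≤ t →
      ∀ z : Fin t → EuclideanSpace ℝ (Fin d),
        (∀ k, ∀ i, |z k i| ≤ r) →
        ∃ σ : Equiv.Perm (Fin t),
          (∀ k, σ (σ k) = k) ∧
          (∀ k l, σ k = k → σ l = l → k = l) ∧
          (∑ k ∈ Finset.univ.filter (fun k => σ k ≠ k), ‖z k - z (σ k)‖ ^ α)
            ≤ B * (t : ℝ) ^ (1 - α / d) := by
  have hd : d ≠ 0 := by rintro rfl; norm_num at hαd; linarith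
  have hθ : 0 < 1 - α / d := by rw [sub_pos, div_lt_one (hα.trans hαd)]; exact hαd
  set B := (4 * r * √d) ^ α / (1 - α / d)
  refine ⟨B, by positivity, fun t _ z hz => ?_⟩
  obtain ⟨σ, hσ, -, hfix, hsum⟩ := exists_involutive_perm_sum_le
    (fun k l => ‖z k - z l‖ ^ α) (fun k => by simp [Real.zero_rpow hα.ne'])
    (fun n => B * (n : ℝ) ^ (1 - α / d)) (fun n => by positivity)
    (fun S hS => by
      obtain ⟨p, hp, q, hq, hpq, hdist⟩ :=
        exists_ne_norm_sub_le_mul_rpow hd z hr S (fun k _ => hz k) hS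
      refine ⟨p, hp, q, hq, hpq, ?_⟩
      rw [norm_sub_rev (z q), ← two_mul, Nat.cast_sub hS, ← mul_sub]
      exact two_mul_rpow_le_rpow_sub_rpow (norm_nonneg _) hdist (by exact_mod_cast hS) hα hαd)
    univ
  refine ⟨σ, hσ, fun k l => hfix k (mem_univ k) l (mem_univ l), ?_⟩
  have hcost_fixed : ∀ k ∈ univ, ‖z k - z (σ k)‖ ^ α ≠ 0 → σ k ≠ k := fun k _ h hk =>
    h (by simp [hk, Real.zero_rpow hα.ne'])
  rw [sum_filter_of_ne hcost_fixed]
  simpa using hsum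

/-- Points in the cube `[-r,r]^d` admit a matching (a permutation of order 2
with at most one fixed point) whose total `α`-power cost is at most `B * t^(1-α/d)`,
for a constant `B` depending only on `d`, `r` and `α ∈ (0,d)`. -/
theorem stmt_0 (d : ℕ) (hd : 1 ≤ d) (r : ℝ) (hr : 0 < r) (α : ℝ)
    (hα : 0 < α) (hαd : α < d) :
    ∃ B : ℝ, 0 < B ∧ ∀ t : ℕ, 2 ≤ t →
      ∀ z : Fin t → EuclideanSpace ℝ (Fin d),
        (∀ k, ∀ i, |z k i| ≤ r) →
        ∃ σ : Equiv.Perm (Fin t),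
          (∀ k, σ (σ k) = k) ∧
          (∀ k l, σ k = k → σ l = l → k = l) ∧
          (∑ k ∈ Finset.univ.filter (fun k => σ k ≠ k), ‖z k - z (σ k)‖ ^ α)
            ≤ B * (t : ℝ) ^ (1 - α / d) :=
  stmt_0_general d r hr α hα hαd
end

section
/- Let p ∈ (0,1) and let f, g be probability densities on R^d with f ≠ g on a set of positive Lebesgue measure. Then ∫ 2p(1−p) f(z)g(z)/(p f(z) + (1−p) g(z)) dz < 2p(1−p). -/
/-!
Pointwise, `((1 - p) a + p b) (p a + (1 - p) b) = a b + p (1 - p) (a - b) ^ 2`, so the harmonic-type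
mean `a b / (p a + (1 - p) b)` is at most the arithmetic mean `(1 - p) a + p b`, strictly where
`a ≠ b`. For two probability densities the right-hand side integrates to `1`, and the strict
pointwise inequality on the non-null set `{f ≠ g}` makes the integral inequality strict.
-/

open MeasureTheory Set

section Pointwise

variable {p a b : ℝ}

lemma weighted_add_mul_weighted_add (p a b : ℝ) :
    ((1 - p) * a + p * b) * (p * a + (1 - p) * b) = a * b + p * (1 - p) * (a - b) ^ 2 := by
  ring

lemma mul_div_weighted_add_le (hp : p ∈ Ioo 0 1) (ha : 0 ≤ a) (hb : 0 ≤ b) :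
    a * b / (p * a + (1 - p) * b) ≤ (1 - p) * a + p * b := by
  obtain ⟨hp0, hp1⟩ := hp
  have hq : 0 < 1 - p := sub_pos.2 hp1
  rcases (show 0 ≤ p * a + (1 - p) * b by positivity).eq_or_lt with hD | hD
  · rw [← hD, div_zero]
    positivity
  · rw [div_le_iff₀ hD, weighted_add_mul_weighted_add]
    have : 0 ≤ p * (1 - p) * (a - b) ^ 2 := by positivity
    linarith

lemma mul_div_weighted_add_lt (hp : p ∈ Ioo 0 1) (ha : 0 ≤ a) (hb : 0 ≤ b) (hab : a ≠ b) :
    a * b / (p * a + (1 - p) * b) < (1 - p) * a + p * b := by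
  obtain ⟨hp0, hp1⟩ := hp
  have hq : 0 < 1 - p := sub_pos.2 hp1
  have hD : 0 < p * a + (1 - p) * b := by
    rcases ha.eq_or_lt with rfl | ha
    · have hb : 0 < b := hb.lt_of_ne hab
      positivity
    · positivity
  rw [div_lt_iff₀ hD, weighted_add_mul_weighted_add]
  have : 0 < p * (1 - p) * (a - b) ^ 2 := by
    have := sub_ne_zero.2 hab
    positivity
  linarith

end Pointwise

section Integral

variable {α : Type*} [MeasurableSpace α] {μ : Measure α}

theorem integral_lt_integral_of_ae_le_of_measure_setOf_lt_ne_zero {f g : α → ℝ}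
    (hfi : Integrable f μ) (hgi : Integrable g μ) (hle : f ≤ᵐ[μ] g)
    (hlt : μ {x | f x < g x} ≠ 0) : ∫ x, f x ∂μ < ∫ x, g x ∂μ := by
  rw [← sub_pos, ← integral_sub hgi hfi,
    integral_pos_iff_support_of_nonneg_ae (hle.mono fun _ h => sub_nonneg.2 h) (hgi.sub hfi)]
  refine pos_iff_ne_zero.2 fun h => hlt (measure_mono_null (fun x hx => ?_) h)
  exact sub_ne_zero.2 (ne_of_gt hx)

theorem integral_mul_div_weighted_add_lt {p : ℝ} (hp : p ∈ Ioo 0 1) {f g : α → ℝ}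
    (hf0 : ∀ x, 0 ≤ f x) (hg0 : ∀ x, 0 ≤ g x)
    (hfi : Integrable f μ) (hgi : Integrable g μ) (hne : ¬ f =ᵐ[μ] g) :
    ∫ x, f x * g x / (p * f x + (1 - p) * g x) ∂μ
      < (1 - p) * (∫ x, f x ∂μ) + p * ∫ x, g x ∂μ := by
  have hmean : Integrable (fun x => (1 - p) * f x + p * g x) μ :=
    (hfi.const_mul _).add (hgi.const_mul _)
  have hquot : Integrable (fun x => f x * g x / (p * f x + (1 - p) * g x)) μ := by
    refine hmean.mono' ?_ (Filter.Eventually.of_forall fun x => ?_)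
    · refine ((hfi.aemeasurable.mul hgi.aemeasurable).div ?_).aestronglyMeasurable
      exact (hfi.aemeasurable.const_mul p).add (hgi.aemeasurable.const_mul (1 - p))
    · have := hf0 x; have := hg0 x; have := hp.1; have := sub_pos.2 hp.2
      have hnonneg : 0 ≤ f x * g x / (p * f x + (1 - p) * g x) := by positivity
      rw [Real.norm_eq_abs, abs_of_nonneg hnonneg]
      exact mul_div_weighted_add_le hp (hf0 x) (hg0 x)
  rw [← integral_const_mul, ← integral_const_mul,
    ← integral_add (hfi.const_mul _) (hgi.const_mul _)]
  refine integral_lt_integral_of_ae_le_of_measure_setOf_lt_ne_zero hquot hmean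
    (Filter.Eventually.of_forall fun x => mul_div_weighted_add_le hp (hf0 x) (hg0 x)) ?_
  refine fun h => hne (measure_mono_null (fun x (hx : f x ≠ g x) => ?_) h)
  exact mul_div_weighted_add_lt hp (hf0 x) (hg0 x) hx

end Integral

theorem stmt_8_general (d : ℕ) (p : ℝ) (hp : p ∈ Set.Ioo (0:ℝ) 1)
    (f g : EuclideanSpace ℝ (Fin d) → ℝ)
    (hf0 : ∀ z, 0 ≤ f z) (hg0 : ∀ z, 0 ≤ g z)
    (hf1 : ∫ z, f z = 1) (hg1 : ∫ z, g z = 1)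
    (hne : ¬ (f =ᵐ[volume] g)) :
    (∫ z, 2 * p * (1 - p) * f z * g z / (p * f z + (1 - p) * g z)) < 2 * p * (1 - p) := by
  have hfi : Integrable f := .of_integral_ne_zero (by rw [hf1]; exact one_ne_zero)
  have hgi : Integrable g := .of_integral_ne_zero (by rw [hg1]; exact one_ne_zero)
  have hc : 0 < 2 * p * (1 - p) := by have := hp.1; have := sub_pos.2 hp.2; positivity
  calc (∫ z, 2 * p * (1 - p) * f z * g z / (p * f z + (1 - p) * g z))
      = 2 * p * (1 - p) * ∫ z, f z * g z / (p * f z + (1 - p) * g z) := by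
        rw [← integral_const_mul]
        congr 1 with z
        ring
    _ < 2 * p * (1 - p) * ((1 - p) * (∫ z, f z) + p * ∫ z, g z) :=
        mul_lt_mul_of_pos_left (integral_mul_div_weighted_add_lt hp hf0 hg0 hfi hgi hne) hc
    _ = 2 * p * (1 - p) := by rw [hf1, hg1]; ring

/-- Strict separation inequality: for probability densities `f ≠ g` (on a set
of positive Lebesgue measure) and `p ∈ (0,1)`,
`∫ 2p(1-p)fg/(pf+(1-p)g) < 2p(1-p)`. (The integrand is 0 where the denominator vanishes,
which is the Lean convention for division by zero.) -/
theorem stmt_8 (d : ℕ) (p : ℝ) (hp : p ∈ Set.Ioo (0:ℝ) 1)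
    (f g : EuclideanSpace ℝ (Fin d) → ℝ)
    (hfm : Measurable f) (hgm : Measurable g)
    (hf0 : ∀ z, 0 ≤ f z) (hg0 : ∀ z, 0 ≤ g z)
    (hf1 : ∫ z, f z = 1) (hg1 : ∫ z, g z = 1)
    (hne : ¬ (f =ᵐ[volume] g)) :
    (∫ z, 2 * p * (1 - p) * f z * g z / (p * f z + (1 - p) * g z)) < 2 * p * (1 - p) :=
  stmt_8_general d p hp f g hf0 hg0 hf1 hg1 hne
end
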